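/- arXiv:2503.16155 — 7 statements merged into one kernel-verified Lean document; each statement's English description precedes it below -/
import Mathlib

section
/- The product of two symmetric and unimodal polynomials with nonnegative real coefficients is symmetric and unimodal. -/
open Polynomial

/-- A real polynomial `p` of degree `d` is symmetric if `a_i = a_{d-i}` for all `0 ≤ i ≤ d`. -/
def IsSymmPoly (p : Polynomial ℝ) : Prop :=
  ∀ i ≤ p.natDegree, p.coeff i = p.coeff (p.natDegree - i)

/-- A real polynomial `p` of degree `d` is unimodal if there is `k ≤ d` with
`a_0 ≤ a_1 ≤ ⋯ ≤ a_k ≥ a_{k+1} ≥ ⋯ ≥ a_d`. -/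
def IsUnimodalPoly (p : Polynomial ℝ) : Prop :=
  ∃ k ≤ p.natDegree, (∀ i, i < k → p.coeff i ≤ p.coeff (i + 1)) ∧
    (∀ i, k ≤ i → i < p.natDegree → p.coeff (i + 1) ≤ p.coeff i)

/-!
A polynomial with nonnegative coefficients that is symmetric and unimodal about `d / 2` is a
nonnegative combination of the plateaus `X ^ j * (1 + X + ⋯ + X ^ (d - 2 * j))`, `2 * j ≤ d`,
the weights being the successive increments `a_j - a_{j-1}` of its coefficients. The product of two
plateaus is a power of `X` times `(1 + ⋯ + X ^ m) * (1 + ⋯ + X ^ n)`, whose coefficients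
`min (i, m) + 1 - (i - n)` rise by one up to the middle and then fall symmetrically. Since
polynomials that are nonnegative, symmetric and unimodal about a fixed centre form a convex cone,
the product of the two combinations is again such a polynomial, centred at the sum of the centres.
-/

open Finset

/-- Unlike in `IsSymmPoly`, the centre `d / 2` of symmetry is fixed rather than read off from the
degree; this is what makes the set a convex cone. -/
def symmUnimodalCone (d : ℕ) : PointedCone ℝ ℝ[X] where
  carrier := {p | (∀ i, 0 ≤ p.coeff i) ∧ p.natDegree ≤ d ∧
    (∀ i j, i + j = d → p.coeff i = p.coeff j) ∧
    (∀ i, 2 * i < d → p.coeff i ≤ p.coeff (i + 1))}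
  add_mem' := by
    rintro p q ⟨hp₀, hpd, hps, hpu⟩ ⟨hq₀, hqd, hqs, hqu⟩
    refine ⟨fun i ↦ ?_, natDegree_add_le_of_degree_le hpd hqd, fun i j hij ↦ ?_,
      fun i hi ↦ ?_⟩ <;> simp only [coeff_add]
    · exact add_nonneg (hp₀ i) (hq₀ i)
    · rw [hps i j hij, hqs i j hij]
    · exact add_le_add (hpu i hi) (hqu i hi)
  zero_mem' := by simp
  smul_mem' := by
    rintro ⟨c, hc⟩ p ⟨hp₀, hpd, hps, hpu⟩
    refine ⟨fun i ↦ ?_, (natDegree_smul_le _ _).trans hpd, fun i j hij ↦ ?_,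
      fun i hi ↦ ?_⟩ <;> simp only [coeff_smul, Nonneg.mk_smul, smul_eq_mul]
    · exact mul_nonneg hc (hp₀ i)
    · rw [hps i j hij]
    · exact mul_le_mul_of_nonneg_left (hpu i hi) hc

noncomputable def onesPoly (m : ℕ) : ℝ[X] := ∑ i ∈ range (m + 1), X ^ i

theorem coeff_onesPoly (m n : ℕ) : (onesPoly m).coeff n = if n ≤ m then 1 else 0 := by
  simp [onesPoly, coeff_X_pow]

theorem coeff_onesPoly_mul_X_pow (m j n : ℕ) :
    (onesPoly m * X ^ j).coeff n = if j ≤ n ∧ n ≤ j + m then 1 else 0 := by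
  rw [coeff_mul_X_pow', coeff_onesPoly]
  split_ifs <;> first | rfl | omega

theorem coeff_onesPoly_mul_onesPoly (m m' n : ℕ) :
    (onesPoly m * onesPoly m').coeff n = ((min n m + 1 - (n - m') : ℕ) : ℝ) := by
  have hterm : ∀ k ∈ range (n + 1), (onesPoly m).coeff k * (onesPoly m').coeff (n - k) =
      if k ∈ Icc (n - m') (min n m) then 1 else 0 := by
    intro k hk
    simp only [coeff_onesPoly, mem_Icc, mem_range] at hk ⊢
    split_ifs <;> simp <;> omega
  rw [coeff_mul, Nat.sum_antidiagonal_eq_sum_range_succ_mk, sum_congr rfl hterm, ← sum_filter,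
    filter_mem_eq_inter, inter_eq_right.2 fun k hk ↦ by simp at hk ⊢; omega]
  simp

theorem onesPoly_mul_onesPoly_mem_symmUnimodalCone (m m' : ℕ) :
    onesPoly m * onesPoly m' ∈ symmUnimodalCone (m + m') := by
  refine ⟨fun i ↦ ?_, natDegree_le_iff_coeff_eq_zero.2 fun i hi ↦ ?_, fun i j hij ↦ ?_,
    fun i hi ↦ ?_⟩ <;> simp only [coeff_onesPoly_mul_onesPoly]
  · positivity
  · norm_cast at hi ⊢; omega
  · norm_cast; omega
  · rw [Nat.cast_le]; omega

theorem mul_X_pow_mem_symmUnimodalCone {d : ℕ} {p : ℝ[X]} (hp : p ∈ symmUnimodalCone d)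
    (s : ℕ) :
    p * X ^ s ∈ symmUnimodalCone (d + 2 * s) := by
  obtain ⟨hp₀, hpd, hps, hpu⟩ := hp
  have hp_zero : ∀ i, d < i → p.coeff i = 0 := fun i hi ↦
    coeff_eq_zero_of_natDegree_lt (by omega)
  refine ⟨fun i ↦ ?_, natDegree_le_iff_coeff_eq_zero.2 fun i hi ↦ ?_, fun i j hij ↦ ?_,
    fun i hi ↦ ?_⟩ <;> simp only [coeff_mul_X_pow']
  · split_ifs
    exacts [hp₀ _, le_rfl]
  · split_ifs
    exacts [hp_zero _ (by omega), rfl]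
  · split_ifs
    · exact hps _ _ (by omega)
    · exact hp_zero _ (by omega)
    · exact (hp_zero _ (by omega)).symm
    · rfl
  · split_ifs
    · rw [show i + 1 - s = i - s + 1 by omega]
      exact hpu _ (by omega)
    · omega
    · exact hp₀ _
    · rfl

theorem onesPoly_mul_X_pow_mul_mem_symmUnimodalCone (m n j k : ℕ) :
    onesPoly m * X ^ j * (onesPoly n * X ^ k) ∈ symmUnimodalCone (m + n + 2 * (j + k)) := by
  rw [show onesPoly m * X ^ j * (onesPoly n * X ^ k) = onesPoly m * onesPoly n * X ^ (j + k) by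
    ring]
  exact mul_X_pow_mem_symmUnimodalCone (onesPoly_mul_onesPoly_mem_symmUnimodalCone m n) (j + k)

noncomputable def coeffIncrement (p : ℝ[X]) : ℕ → ℝ
  | 0 => p.coeff 0
  | j + 1 => p.coeff (j + 1) - p.coeff j

theorem sum_range_coeffIncrement (p : ℝ[X]) (n : ℕ) :
    ∑ j ∈ range (n + 1), coeffIncrement p j = p.coeff n := by
  rw [sum_range_succ']
  simp only [coeffIncrement, sum_range_sub (fun i ↦ p.coeff i), sub_add_cancel]

theorem coeffIncrement_nonneg {d : ℕ} {p : ℝ[X]} (hp : p ∈ symmUnimodalCone d) {j : ℕ}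
    (hj : 2 * j ≤ d) : 0 ≤ coeffIncrement p j := by
  obtain ⟨hp₀, -, -, hpu⟩ := hp
  cases j with
  | zero => exact hp₀ 0
  | succ j => exact sub_nonneg.2 (hpu j (by omega))

theorem eq_sum_coeffIncrement_smul {d : ℕ} {p : ℝ[X]} (hp : p ∈ symmUnimodalCone d) :
    p = ∑ j ∈ range (d / 2 + 1), coeffIncrement p j • (onesPoly (d - 2 * j) * X ^ j) := by
  obtain ⟨-, hpd, hps, -⟩ := hp
  ext n
  simp only [finsetSum_coeff, coeff_smul, smul_eq_mul, coeff_onesPoly_mul_X_pow, mul_ite, mul_one,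
    mul_zero, ← sum_filter]
  rcases le_or_gt n d with hn | hn
  · rw [show (range (d / 2 + 1)).filter (fun j ↦ j ≤ n ∧ n ≤ j + (d - 2 * j)) =
        range (min n (d - n) + 1) by ext j; simp; omega, sum_range_coeffIncrement]
    rcases le_total n (d - n) with h | h
    · rw [min_eq_left h]
    · rw [min_eq_right h, hps n (d - n) (by omega)]
  · rw [coeff_eq_zero_of_natDegree_lt (hpd.trans_lt hn)]
    exact (sum_eq_zero fun j hj ↦ by simp at hj; omega).symm

theorem mul_mem_symmUnimodalCone {d e : ℕ} {p q : ℝ[X]} (hp : p ∈ symmUnimodalCone d)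
    (hq : q ∈ symmUnimodalCone e) : p * q ∈ symmUnimodalCone (d + e) := by
  rw [eq_sum_coeffIncrement_smul hp, eq_sum_coeffIncrement_smul hq, sum_mul_sum]
  refine Submodule.sum_mem _ fun j hj ↦ Submodule.sum_mem _ fun k hk ↦ ?_
  have hj : 2 * j ≤ d := by simp at hj; omega
  have hk : 2 * k ≤ e := by simp at hk; omega
  rw [smul_mul_smul_comm]
  refine PointedCone.smul_mem _
    (mul_nonneg (coeffIncrement_nonneg hp hj) (coeffIncrement_nonneg hq hk)) ?_
  convert onesPoly_mul_X_pow_mul_mem_symmUnimodalCone (d - 2 * j) (e - 2 * k) j k using 2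
  omega

theorem mem_symmUnimodalCone_natDegree_iff {p : ℝ[X]} :
    p ∈ symmUnimodalCone p.natDegree ↔
      (∀ i, 0 ≤ p.coeff i) ∧ IsSymmPoly p ∧ IsUnimodalPoly p := by
  set d := p.natDegree
  constructor
  · rintro ⟨hp₀, -, hps, hpu⟩
    refine ⟨hp₀, fun i hi ↦ hps i (d - i) (by omega), d / 2, Nat.div_le_self d 2,
      fun i hi ↦ hpu i (by omega), fun i hi hid ↦ ?_⟩
    rw [hps (i + 1) (d - i - 1) (by omega), hps i (d - i) (by omega)]
    simpa [show d - i - 1 + 1 = d - i by omega] using hpu (d - i - 1) (by omega)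
  · rintro ⟨hp₀, hps, k, hkd, hinc, hdec⟩
    have hps' : ∀ i j, i + j = d → p.coeff i = p.coeff j := fun i j hij ↦ by
      rw [hps i (by omega), show d - i = j by omega]
    have hanti : AntitoneOn p.coeff (Set.Icc k d) :=
      antitoneOn_of_add_one_le Set.ordConnected_Icc fun i _ hi hi' ↦
        hdec i hi.1 (by simp at hi'; omega)
    refine ⟨hp₀, le_rfl, hps', fun i hi ↦ ?_⟩
    rcases lt_or_ge i k with hik | hik
    · exact hinc i hik
    -- past the peak, compare the mirror image `d - i` of `i` with `i + 1`
    rw [hps' i (d - i) (by omega)]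
    exact hanti ⟨by omega, by omega⟩ ⟨by omega, by omega⟩ (by omega)

/-- The product of two symmetric and unimodal polynomials with nonnegative real
coefficients is symmetric and unimodal. -/
theorem product_symmetric_unimodal (p q : Polynomial ℝ)
    (hp0 : ∀ i, 0 ≤ p.coeff i) (hq0 : ∀ i, 0 ≤ q.coeff i)
    (hps : IsSymmPoly p) (hpu : IsUnimodalPoly p)
    (hqs : IsSymmPoly q) (hqu : IsUnimodalPoly q) :
    IsSymmPoly (p * q) ∧ IsUnimodalPoly (p * q) := by
  have hpq := mul_mem_symmUnimodalCone (mem_symmUnimodalCone_natDegree_iff.2 ⟨hp0, hps, hpu⟩)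
    (mem_symmUnimodalCone_natDegree_iff.2 ⟨hq0, hqs, hqu⟩)
  rcases eq_or_ne (p * q) 0 with h | h
  · rw [h]
    exact (mem_symmUnimodalCone_natDegree_iff.1 (by simp)).2
  · rw [← natDegree_mul (left_ne_zero_of_mul h) (right_ne_zero_of_mul h)] at hpq
    exact (mem_symmUnimodalCone_natDegree_iff.1 hpq).2
end

section
/- Let m ≥ 2 and let 1 ≤ d_1 ≤ d_2 ≤ … ≤ d_m be integers, and set d = d_1 + … + d_m. Write f = ∏_{i=1}^m f_{d_i} = ∑_{i=0}^d a_i t^i. Then f is symmetric, and either f is strictly unimodal, or the coefficients a_i are strictly increasing for 0 ≤ i ≤ d_1 + … + d_{m-1}, constant for d_1 + … + d_{m-1} ≤ i ≤ d_m, and strictly decreasing for d_m ≤ i ≤ d. -/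
/-!
Multiplying a polynomial by `f_n` replaces its coefficient sequence `a` by the window sums
`b_j = a_{j-n} + ⋯ + a_j`, so `b_{j+1} - b_j = a_{j+1} - a_{j-n}`. If `a` is supported on
`[0, E]`, symmetric and unimodal, this difference is nonnegative left of the new centre,
strictly positive as long as `j < E` and `j - n` is negative or lies in the strictly
increasing part of `a`, and zero on `[E, n)` where both terms vanish. Adding the factors in
increasing order of degree, the product of the first `m` of them therefore increases strictly
exactly up to `min (d_1 + ⋯ + d_{m-1}) (D / 2)`, is constant up to the mirror point, and
decreases after it.
-/

open Polynomial

/-- `fpoly d` is the polynomial `f_d = 1 + t + t^2 + ⋯ + t^d`. -/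
noncomputable def fpoly (d : ℕ) : Polynomial ℝ :=
  ∑ i ∈ Finset.range (d + 1), Polynomial.X ^ i

/-- A sequence `a_0, …, a_d` is strictly unimodal if, for `d = 2m`,
`a_0 < a_1 < ⋯ < a_m > a_{m+1} > ⋯ > a_{2m}`, and for `d = 2m+1`,
`a_0 < a_1 < ⋯ < a_m = a_{m+1} > a_{m+2} > ⋯ > a_{2m+1}`. -/
def StrictlyUnimodalSeq (d : ℕ) (a : ℕ → ℝ) : Prop :=
  (∀ i, i < d / 2 → a i < a (i + 1)) ∧
  (Odd d → a (d / 2) = a (d / 2 + 1)) ∧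
  (∀ i, (d + 1) / 2 ≤ i → i < d → a (i + 1) < a i)

/-- The sequence `a` strictly increases on `[0, e]`, is constant on `[e, p]`,
and strictly decreases on `[p, D]`. -/
def IncConstDec (a : ℕ → ℝ) (e p D : ℕ) : Prop :=
  (∀ i, i < e → a i < a (i + 1)) ∧
  (∀ i, e ≤ i → i < p → a i = a (i + 1)) ∧
  (∀ i, p ≤ i → i < D → a (i + 1) < a i)

open Finset

/-- Coefficients extended by zero to negative indices, so that window sums need no truncated
subtraction. -/
noncomputable def intCoeff (p : ℝ[X]) (j : ℤ) : ℝ :=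
  if 0 ≤ j then p.coeff j.toNat else 0

@[simp]
theorem intCoeff_natCast (p : ℝ[X]) (k : ℕ) : intCoeff p k = p.coeff k := by
  simp [intCoeff]

theorem intCoeff_of_neg (p : ℝ[X]) {j : ℤ} (hj : j < 0) : intCoeff p j = 0 :=
  if_neg hj.not_ge

def window {M : Type*} [AddCommMonoid M] (n : ℕ) (G : ℤ → M) (j : ℤ) : M :=
  ∑ i ∈ range (n + 1), G (j - i)

theorem window_succ {M : Type*} [AddCommGroup M] (n : ℕ) (G : ℤ → M) (j : ℤ) :
    window n G (j + 1) = window n G j + G (j + 1) - G (j - n) := by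
  simp only [window]
  rw [sum_range_succ', sum_range_succ]
  push_cast
  simp only [add_sub_add_right_eq_sub, sub_zero]
  abel

theorem window_symm {M : Type*} [AddCommMonoid M] {G : ℤ → M} {E : ℤ}
    (hG : ∀ j, G (E - j) = G j) (n : ℕ) (j : ℤ) :
    window n G (E + n - j) = window n G j := by
  unfold window
  rw [← sum_range_reflect]
  refine sum_congr rfl fun i hi => ?_
  have hi := mem_range.1 hi
  rw [← hG]
  congr 1
  push_cast [Nat.cast_sub (show i ≤ n by omega)]
  ring

theorem intCoeff_mul_fpoly (p : ℝ[X]) (n : ℕ) :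
    intCoeff (p * fpoly n) = window n (intCoeff p) := by
  ext j
  rcases lt_or_ge j 0 with hj | hj
  · rw [intCoeff_of_neg _ hj]
    exact (sum_eq_zero fun i _ => intCoeff_of_neg _ (by omega)).symm
  · lift j to ℕ using hj with k
    simp only [intCoeff_natCast, window, fpoly, mul_sum, finsetSum_coeff, coeff_mul_X_pow']
    refine sum_congr rfl fun i _ => ?_
    unfold intCoeff
    split_ifs <;> first | omega | congr 1 <;> omega

structure SymmetricPlateau (F : ℤ → ℝ) (D e : ℕ) : Prop where
  eq_zero_of_neg : ∀ j : ℤ, j < 0 → F j = 0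
  symm : ∀ j : ℤ, F (D - j) = F j
  pos : ∀ j : ℤ, 0 ≤ j → j ≤ D → 0 < F j
  lt_succ : ∀ j : ℤ, 0 ≤ j → j < e → F j < F (j + 1)
  eq_succ : ∀ j : ℤ, e ≤ j → j + e < D → F j = F (j + 1)

namespace SymmetricPlateau

variable {F : ℤ → ℝ} {D e : ℕ}

theorem eq_zero_of_gt (h : SymmetricPlateau F D e) {j : ℤ} (hj : D < j) : F j = 0 := by
  rw [← h.symm, h.eq_zero_of_neg _ (by omega)]

theorem nonneg (h : SymmetricPlateau F D e) (j : ℤ) : 0 ≤ F j := by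
  rcases lt_or_ge j 0 with hj | hj
  · exact (h.eq_zero_of_neg j hj).ge
  rcases le_or_gt j D with hjD | hjD
  · exact (h.pos j hj hjD).le
  · exact (h.eq_zero_of_gt hjD).ge

theorem le_succ (h : SymmetricPlateau F D e) {j : ℤ} (hj : 2 * j + 1 ≤ D) :
    F j ≤ F (j + 1) := by
  rcases lt_or_ge j 0 with h0 | h0
  · rw [h.eq_zero_of_neg j h0]
    exact h.nonneg _
  rcases lt_or_ge j e with he | he
  · exact (h.lt_succ j h0 he).le
  · exact (h.eq_succ j he (by omega)).le

theorem le_of_le_of_two_mul_le (h : SymmetricPlateau F D e) {i j : ℤ} (hij : i ≤ j)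
    (hj : 2 * j ≤ D + 1) : F i ≤ F j := by
  induction j, hij using Int.leInduction with
  | base => rfl
  | succ k _ ih => exact (ih (by omega)).trans (h.le_succ (by omega))

theorem le_of_le_of_add_le (h : SymmetricPlateau F D e) {i j : ℤ} (hij : i ≤ j)
    (hD : i + j ≤ D) : F i ≤ F j := by
  rcases le_or_gt (2 * j) (D + 1) with hj | hj
  · exact h.le_of_le_of_two_mul_le hij hj
  · rw [← h.symm j]
    exact h.le_of_le_of_two_mul_le (by omega) (by omega)

theorem lt_of_lt_of_add_lt (h : SymmetricPlateau F D e) {i j : ℤ} (hi : 0 ≤ i) (he : i < e)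
    (hij : i < j) (hD : i + j < D) : F i < F j :=
  (h.lt_succ i hi he).trans_le (h.le_of_le_of_add_le (by omega) (by omega))

variable {G : ℤ → ℝ} {E : ℕ}

theorem window_pos (hG : SymmetricPlateau G E e) (n : ℕ) {j : ℤ} (h0 : 0 ≤ j)
    (hj : j ≤ E + n) : 0 < window n G j :=
  sum_pos' (fun _ _ => hG.nonneg _)
    ⟨min j.toNat n, mem_range.2 (by omega), hG.pos _ (by omega) (by omega)⟩

theorem window_lt_window_succ (hG : SymmetricPlateau G E e) (n : ℕ)
    (he : min E ((E + n) / 2) ≤ e + n) {j : ℤ} (h0 : 0 ≤ j) (hj : j < min E ((E + n) / 2)) :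
    window n G j < window n G (j + 1) := by
  suffices G (j - n) < G (j + 1) by rw [window_succ]; linarith
  rcases lt_or_ge j n with hjn | hjn
  · rw [hG.eq_zero_of_neg _ (by omega)]
    exact hG.pos _ (by omega) (by omega)
  · exact hG.lt_of_lt_of_add_lt (by omega) (by omega) (by omega) (by omega)

theorem window_eq_window_succ (hG : SymmetricPlateau G E e) (n : ℕ) {j : ℤ}
    (h1 : min E ((E + n) / 2) ≤ j) (h2 : j + min E ((E + n) / 2) < E + n) :
    window n G j = window n G (j + 1) := by
  suffices G (j + 1) = G (j - n) by rw [window_succ, this]; abel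
  rcases le_or_gt (E : ℤ) j with hEj | hjE
  · rw [hG.eq_zero_of_gt (by omega), hG.eq_zero_of_neg _ (by omega)]
  · rw [← hG.symm]
    congr 1
    omega

theorem window (hG : SymmetricPlateau G E e) (n : ℕ) (he : min E ((E + n) / 2) ≤ e + n) :
    SymmetricPlateau (window n G) (E + n) (min E ((E + n) / 2)) where
  eq_zero_of_neg _ hj := sum_eq_zero fun _ _ => hG.eq_zero_of_neg _ (by omega)
  symm j := by
    push_cast
    exact window_symm hG.symm n j
  pos _ := hG.window_pos n
  lt_succ _ := hG.window_lt_window_succ n he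
  eq_succ _ := hG.window_eq_window_succ n

variable {p : ℝ[X]}

theorem coeff_symm (h : SymmetricPlateau (intCoeff p) D e) {i : ℕ} (hi : i ≤ D) :
    p.coeff i = p.coeff (D - i) := by
  rw [← intCoeff_natCast, ← intCoeff_natCast, Nat.cast_sub hi, h.symm]

theorem incConstDec (h : SymmetricPlateau (intCoeff p) D e) : IncConstDec p.coeff e (D - e) D := by
  refine ⟨fun i hi => ?_, fun i h1 h2 => ?_, fun i h1 h2 => ?_⟩
  · exact_mod_cast h.lt_succ i (by omega) (by omega)
  · exact_mod_cast h.eq_succ i (by omega) (by omega)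
  · rw [h.coeff_symm (by omega : i + 1 ≤ D), h.coeff_symm h2.le,
      show D - i = D - (i + 1) + 1 by omega]
    exact_mod_cast h.lt_succ (D - (i + 1) : ℕ) (by omega) (by omega)

end SymmetricPlateau

theorem IncConstDec.strictlyUnimodalSeq {a : ℕ → ℝ} {D : ℕ}
    (h : IncConstDec a (D / 2) (D - D / 2) D) : StrictlyUnimodalSeq D a :=
  ⟨h.1, fun hD => h.2.1 _ le_rfl (by rcases hD with ⟨k, rfl⟩; omega),
    fun i h1 h2 => h.2.2 i (by omega) h2⟩

theorem symmetricPlateau_intCoeff_one : SymmetricPlateau (intCoeff 1) 0 0 where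
  eq_zero_of_neg _ hj := intCoeff_of_neg 1 hj
  symm j := by
    simp only [intCoeff, coeff_one]
    split_ifs <;> first | rfl | omega
  pos j h0 h1 := by
    obtain rfl : j = 0 := by omega
    simp [intCoeff]
  lt_succ _ _ h := by omega
  eq_succ _ _ h := by omega

theorem symmetricPlateau_prod_fpoly (m : ℕ) (d : ℕ → ℕ)
    (hmono : ∀ i j, i ≤ j → j < m → d i ≤ d j) :
    SymmetricPlateau (intCoeff (∏ i ∈ range m, fpoly (d i))) (∑ i ∈ range m, d i)
      (min (∑ i ∈ range (m - 1), d i) ((∑ i ∈ range m, d i) / 2)) := by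
  induction m with
  | zero => simpa using symmetricPlateau_intCoeff_one
  | succ m ih =>
    have hlast : ∑ i ∈ range m, d i ≤ ∑ i ∈ range (m - 1), d i + d m := by
      rcases m with _ | m
      · simp
      · rw [sum_range_succ, Nat.add_sub_cancel]
        exact Nat.add_le_add_left (hmono _ _ m.le_succ (by omega)) _
    rw [prod_range_succ, intCoeff_mul_fpoly, sum_range_succ, Nat.add_sub_cancel]
    exact (ih fun i j hij hj => hmono i j hij (by omega)).window (d m) (by omega)

theorem prod_fpoly_symmetric_and_unimodal_or_plateau_general (m : ℕ) (d : ℕ → ℕ)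
    (hmono : ∀ i j, i ≤ j → j < m → d i ≤ d j) :
    (∀ i ≤ ∑ i ∈ Finset.range m, d i,
        (∏ i ∈ Finset.range m, fpoly (d i)).coeff i =
          (∏ i ∈ Finset.range m, fpoly (d i)).coeff ((∑ i ∈ Finset.range m, d i) - i)) ∧
    (StrictlyUnimodalSeq (∑ i ∈ Finset.range m, d i)
        ((∏ i ∈ Finset.range m, fpoly (d i)).coeff) ∨
      IncConstDec ((∏ i ∈ Finset.range m, fpoly (d i)).coeff)
        (∑ i ∈ Finset.range (m - 1), d i) (d (m - 1)) (∑ i ∈ Finset.range m, d i)) := by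
  have h := symmetricPlateau_prod_fpoly m d hmono
  refine ⟨fun i hi => h.coeff_symm hi, ?_⟩
  rcases le_or_gt ((∑ i ∈ range m, d i) / 2) (∑ i ∈ range (m - 1), d i) with hE | hE
  · rw [min_eq_right hE] at h
    exact .inl h.incConstDec.strictlyUnimodalSeq
  · rw [min_eq_left hE.le] at h
    obtain ⟨k, rfl⟩ : ∃ k, m = k + 1 :=
      Nat.exists_eq_succ_of_ne_zero (by rintro rfl; simp at hE)
    have hlast :
        ∑ i ∈ range (k + 1), d i - ∑ i ∈ range (k + 1 - 1), d i = d (k + 1 - 1) := by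
      simp [sum_range_succ]
    exact .inr (hlast ▸ h.incConstDec)

/-- Proposition: for `m ≥ 2` and `1 ≤ d_1 ≤ ⋯ ≤ d_m` with `D = d_1 + ⋯ + d_m`, the
polynomial `f = ∏ f_{d_i}` is symmetric, and either strictly unimodal or its coefficients
strictly increase until `d_1 + ⋯ + d_{m-1}`, are constant until `d_m`, then strictly
decrease until `D`. -/
theorem prod_fpoly_symmetric_and_unimodal_or_plateau (m : ℕ) (hm : 2 ≤ m) (d : ℕ → ℕ)
    (hd1 : ∀ i < m, 1 ≤ d i) (hmono : ∀ i j, i ≤ j → j < m → d i ≤ d j) :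
    (∀ i ≤ ∑ i ∈ Finset.range m, d i,
        (∏ i ∈ Finset.range m, fpoly (d i)).coeff i =
          (∏ i ∈ Finset.range m, fpoly (d i)).coeff ((∑ i ∈ Finset.range m, d i) - i)) ∧
    (StrictlyUnimodalSeq (∑ i ∈ Finset.range m, d i)
        ((∏ i ∈ Finset.range m, fpoly (d i)).coeff) ∨
      IncConstDec ((∏ i ∈ Finset.range m, fpoly (d i)).coeff)
        (∑ i ∈ Finset.range (m - 1), d i) (d (m - 1)) (∑ i ∈ Finset.range m, d i)) :=
  prod_fpoly_symmetric_and_unimodal_or_plateau_general m d hmono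
end

section
/- Let n ≥ 2 and let 1 ≤ d_1 ≤ d_2 ≤ … ≤ d_n be integers. If d_n ≤ d_1 + … + d_{n-1} + 1, then the polynomial ∏_{i=1}^n f_{d_i} is strictly unimodal. -/
open Polynomial

/-!
Call a palindromic real polynomial `A` of degree `D` with positive constant term a plateau
with parameter `e` if its coefficients strictly increase up to index `e` and are constant on
`[e, D - e]`. Since `(X - 1) f_d = X^(d+1) - 1`, the coefficients `b` of `A f_d` satisfy
`b_(k+1) - b_k = a_(k+1) - a_(k-d)`, and comparing `a_(k+1)` with `a_(k-d)` through their
distances to the ends of `[0, D]` shows that `A f_d` is again a plateau, with parameter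
`min (e + d) (min ⌊(D + d)/2⌋ D)`. Multiplying in the `f_(d_i)` in increasing order of `d_i`,
the product of the first `m + 1` factors is a plateau with parameter `min ⌊S_(m+1)/2⌋ S_m`,
where `S_k = d_0 + ⋯ + d_(k-1)`. The hypothesis `d_(n-1) ≤ S_(n-1) + 1` makes this `⌊S_n/2⌋`,
and a plateau with parameter `⌊D/2⌋` is strictly unimodal.
-/

open Finset

lemma coeff_fpoly (d j : ℕ) : (fpoly d).coeff j = if j ≤ d then 1 else 0 := by
  simp [fpoly, coeff_X_pow]

lemma fpoly_ne_zero (d : ℕ) : fpoly d ≠ 0 := fun h => by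
  simpa [h] using coeff_fpoly d 0

lemma natDegree_fpoly (d : ℕ) : (fpoly d).natDegree = d :=
  natDegree_eq_of_le_of_coeff_ne_zero
    (natDegree_le_iff_coeff_eq_zero.mpr fun i hi => by simp [coeff_fpoly, Nat.not_le.mpr hi])
    (by simp [coeff_fpoly])

lemma reverse_fpoly (d : ℕ) : (fpoly d).reverse = fpoly d := by
  ext j
  rw [coeff_reverse, natDegree_fpoly]
  by_cases hj : j ≤ d
  · simp [revAt_le hj, coeff_fpoly, hj]
  · rw [← revAtFun_eq, revAtFun, if_neg hj]

lemma natDegree_prod_fpoly (s : Finset ℕ) (d : ℕ → ℕ) :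
    (∏ i ∈ s, fpoly (d i)).natDegree = ∑ i ∈ s, d i := by
  simp [natDegree_prod _ _ fun i _ => fpoly_ne_zero (d i), natDegree_fpoly]

lemma coeff_mul_fpoly_succ (A : ℝ[X]) (d k : ℕ) :
    (A * fpoly d).coeff (k + 1) =
      (A * fpoly d).coeff k + A.coeff (k + 1) - if d ≤ k then A.coeff (k - d) else 0 := by
  have hgeom : A * fpoly d * (X - 1) = A * X ^ (d + 1) - A := by
    rw [mul_assoc, fpoly, geom_sum_mul]
    ring
  have h := congrArg (coeff · (k + 1)) hgeom
  simp only [mul_sub, mul_one, coeff_sub, coeff_mul_X, coeff_mul_X_pow', Nat.add_le_add_iff_right,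
    Nat.add_sub_add_right] at h
  linarith

structure IsSymmPlateau (A : ℝ[X]) (e : ℕ) : Prop where
  reverse_eq : A.reverse = A
  coeff_zero_pos : 0 < A.coeff 0
  two_mul_le_natDegree : 2 * e ≤ A.natDegree
  coeff_lt_succ : ∀ i < e, A.coeff i < A.coeff (i + 1)
  coeff_succ_eq : ∀ i, e ≤ i → i < A.natDegree - e → A.coeff (i + 1) = A.coeff i

namespace IsSymmPlateau

variable {A : ℝ[X]} {e : ℕ}

lemma ne_zero (hA : IsSymmPlateau A e) : A ≠ 0 := fun h => by
  simpa [h] using hA.coeff_zero_pos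

lemma coeff_natDegree_sub (hA : IsSymmPlateau A e) {i : ℕ} (hi : i ≤ A.natDegree) :
    A.coeff (A.natDegree - i) = A.coeff i := by
  calc A.coeff (A.natDegree - i) = A.reverse.coeff (A.natDegree - i) := by rw [hA.reverse_eq]
    _ = A.coeff i := by rw [coeff_reverse, revAt_le (Nat.sub_le _ _), Nat.sub_sub_self hi]

lemma strictMonoOn_coeff (hA : IsSymmPlateau A e) : StrictMonoOn A.coeff (Set.Iic e) :=
  strictMonoOn_Iic_of_lt_succ hA.coeff_lt_succ

lemma coeff_eq_coeff_of_le (hA : IsSymmPlateau A e) {i : ℕ} (hei : e ≤ i)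
    (hi : i ≤ A.natDegree - e) : A.coeff i = A.coeff e := by
  induction i, hei using Nat.le_induction with
  | base => rfl
  | succ i hei ih => rw [hA.coeff_succ_eq i hei (by omega), ih (by omega)]

lemma coeff_eq_coeff_min (hA : IsSymmPlateau A e) {i : ℕ} (hi : i ≤ A.natDegree) :
    A.coeff i = A.coeff (min e (min i (A.natDegree - i))) := by
  have hhalf : ∀ j, 2 * j ≤ A.natDegree → A.coeff j = A.coeff (min e j) := fun j hj => by
    rcases le_total j e with hje | hej
    · rw [min_eq_right hje]
    · rw [min_eq_left hej, hA.coeff_eq_coeff_of_le hej (by omega)]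
  rcases le_total (2 * i) A.natDegree with h2i | h2i
  · rw [min_eq_left (show i ≤ A.natDegree - i by omega), hhalf i h2i]
  · rw [min_eq_right (show A.natDegree - i ≤ i by omega), ← hA.coeff_natDegree_sub hi,
      hhalf _ (by omega)]

lemma coeff_lt_of_min_lt (hA : IsSymmPlateau A e) {i j : ℕ} (hi : i ≤ A.natDegree)
    (hj : j ≤ A.natDegree)
    (hij : min e (min i (A.natDegree - i)) < min e (min j (A.natDegree - j))) :
    A.coeff i < A.coeff j := by
  rw [hA.coeff_eq_coeff_min hi, hA.coeff_eq_coeff_min hj]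
  exact hA.strictMonoOn_coeff (Set.mem_Iic.mpr (min_le_left _ _))
    (Set.mem_Iic.mpr (min_le_left _ _)) hij

lemma coeff_pos (hA : IsSymmPlateau A e) {i : ℕ} (hi : i ≤ A.natDegree) : 0 < A.coeff i := by
  rw [hA.coeff_eq_coeff_min hi]
  exact hA.coeff_zero_pos.trans_le <| hA.strictMonoOn_coeff.monotoneOn
    (Set.mem_Iic.mpr (Nat.zero_le e))
    (Set.mem_Iic.mpr (min_le_left _ _)) (Nat.zero_le _)

lemma mul_fpoly (hA : IsSymmPlateau A e) (d : ℕ) :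
    IsSymmPlateau (A * fpoly d) (min (e + d) (min ((A.natDegree + d) / 2) A.natDegree)) := by
  have hdeg : (A * fpoly d).natDegree = A.natDegree + d := by
    rw [natDegree_mul hA.ne_zero (fpoly_ne_zero d), natDegree_fpoly]
  refine ⟨?_, ?_, by omega, fun k hk => ?_, fun k hk hk' => ?_⟩
  · rw [reverse_mul_of_domain, hA.reverse_eq, reverse_fpoly]
  · simpa [mul_coeff_zero, coeff_fpoly] using hA.coeff_zero_pos
  · rw [coeff_mul_fpoly_succ]
    have : (if d ≤ k then A.coeff (k - d) else 0) < A.coeff (k + 1) := by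
      split_ifs
      · exact hA.coeff_lt_of_min_lt (by omega) (by omega) (by omega)
      · exact hA.coeff_pos (by omega)
    linarith
  · rw [hdeg] at hk'
    rw [coeff_mul_fpoly_succ]
    have : (if d ≤ k then A.coeff (k - d) else 0) = A.coeff (k + 1) := by
      split_ifs
      · rw [hA.coeff_eq_coeff_min (by omega), hA.coeff_eq_coeff_min (i := k + 1) (by omega)]
        congr 1
        omega
      · exact (coeff_eq_zero_of_natDegree_lt (by omega)).symm
    linarith

lemma strictlyUnimodalSeq (hA : IsSymmPlateau A (A.natDegree / 2)) :
    StrictlyUnimodalSeq A.natDegree A.coeff := by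
  refine ⟨hA.coeff_lt_succ, fun ⟨m, hm⟩ => (hA.coeff_succ_eq _ le_rfl (by omega)).symm,
    fun i hi hi' => ?_⟩
  rw [← hA.coeff_natDegree_sub hi'.le, ← hA.coeff_natDegree_sub (i := i + 1) hi']
  exact hA.strictMonoOn_coeff (Set.mem_Iic.mpr (by omega)) (Set.mem_Iic.mpr (by omega))
    (by omega)

end IsSymmPlateau

lemma isSymmPlateau_fpoly (d : ℕ) : IsSymmPlateau (fpoly d) 0 where
  reverse_eq := reverse_fpoly d
  coeff_zero_pos := by simp [coeff_fpoly]
  two_mul_le_natDegree := by omega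
  coeff_lt_succ := fun i hi => absurd hi (Nat.not_lt_zero i)
  coeff_succ_eq := fun i _ hi => by
    rw [natDegree_fpoly] at hi
    rw [coeff_fpoly, coeff_fpoly, if_pos (by omega), if_pos (by omega)]

/-- Once the last and largest factor `f_(d m)` is multiplied in, the plateau starts at
`S_m = d 0 + ⋯ + d (m - 1)`, unless that lies beyond the middle. -/
lemma isSymmPlateau_prod_fpoly (d : ℕ → ℕ) (m : ℕ) (hmono : ∀ i < m, d i ≤ d (i + 1)) :
    IsSymmPlateau (∏ i ∈ range (m + 1), fpoly (d i))
      (min ((∑ i ∈ range (m + 1), d i) / 2) (∑ i ∈ range m, d i)) := by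
  induction m with
  | zero => simpa using isSymmPlateau_fpoly (d 0)
  | succ m ih =>
    have hstep := (ih fun i hi => hmono i (by omega)).mul_fpoly (d (m + 1))
    rw [natDegree_prod_fpoly] at hstep
    rw [prod_range_succ _ (m + 1)]
    convert hstep using 1
    have := hmono m (by omega)
    simp only [sum_range_succ]
    omega

theorem prod_fpoly_strictlyUnimodal_general (n : ℕ) (d : ℕ → ℕ)
    (hmono : ∀ i j, i ≤ j → j < n → d i ≤ d j)
    (h : d (n - 1) ≤ (∑ i ∈ Finset.range (n - 1), d i) + 1) :
    StrictlyUnimodalSeq (∑ i ∈ Finset.range n, d i)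
      ((∏ i ∈ Finset.range n, fpoly (d i)).coeff) := by
  rcases n with _ | m
  · simp [StrictlyUnimodalSeq]
  have hP := isSymmPlateau_prod_fpoly d m fun i hi => hmono i (i + 1) (by omega) (by omega)
  have hmid : min ((∑ i ∈ range (m + 1), d i) / 2) (∑ i ∈ range m, d i) =
      (∏ i ∈ range (m + 1), fpoly (d i)).natDegree / 2 := by
    rw [natDegree_prod_fpoly, sum_range_succ]
    simp only [Nat.add_sub_cancel] at h
    omega
  rw [hmid] at hP
  simpa [natDegree_prod_fpoly] using hP.strictlyUnimodalSeq

/-- If `n ≥ 2`, `1 ≤ d_1 ≤ ⋯ ≤ d_n` and `d_n ≤ d_1 + ⋯ + d_{n-1} + 1`, then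
`∏_{i=1}^n f_{d_i}` is strictly unimodal. -/
theorem prod_fpoly_strictlyUnimodal (n : ℕ) (hn : 2 ≤ n) (d : ℕ → ℕ)
    (hd1 : ∀ i < n, 1 ≤ d i) (hmono : ∀ i j, i ≤ j → j < n → d i ≤ d j)
    (h : d (n - 1) ≤ (∑ i ∈ Finset.range (n - 1), d i) + 1) :
    StrictlyUnimodalSeq (∑ i ∈ Finset.range n, d i)
      ((∏ i ∈ Finset.range n, fpoly (d i)).coeff) :=
  prod_fpoly_strictlyUnimodal_general n d hmono h
end

section
/- Let f = ∑_{i=0}^{d} a_i t^i be a symmetric, strictly unimodal polynomial of degree d with positive coefficients. Then for an integer D with 2 ≤ D ≤ d, the first nonpositive coefficient of (1 − t^D)·f is 0 if and only if d and D have the same parity. -/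
open Polynomial

/-- If `f` is a symmetric, strictly unimodal polynomial of degree `d` with positive
coefficients and `2 ≤ D ≤ d`, then the first nonpositive coefficient of `(1 - t^D)·f`
is `0` iff `d` and `D` have the same parity. -/
theorem first_nonpos_coeff_zero_iff_same_parity (d : ℕ) (f : Polynomial ℝ)
    (hdeg : f.natDegree = d)
    (hpos : ∀ i ≤ d, 0 < f.coeff i)
    (hsymm : ∀ i ≤ d, f.coeff i = f.coeff (d - i))
    (huni : StrictlyUnimodalSeq d f.coeff)
    (D : ℕ) (hD2 : 2 ≤ D) (hDd : D ≤ d) :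
    ((1 - Polynomial.X ^ D) * f).coeff
        (sInf {i : ℕ | ((1 - Polynomial.X ^ D) * f).coeff i ≤ 0}) = 0 ↔
      (Even d ↔ Even D) := by
  obtain ⟨hu1, hu2, hu3⟩ := huni
  -- strict monotonicity up to d/2
  have hmono : ∀ j, j ≤ d / 2 → ∀ i, i < j → f.coeff i < f.coeff j := by
    intro j
    induction j with
    | zero => intro _ i hi; omega
    | succ k ih =>
      intro hk i hi
      have hk' : k < d / 2 := by omega
      rcases Nat.lt_succ_iff_lt_or_eq.mp hi with h | h
      · exact (ih (by omega) i h).trans (hu1 k hk')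
      · rw [h]; exact hu1 k hk'
  have haux_eq : ∀ i, i ≤ d → f.coeff i = f.coeff (min i (d - i)) := by
    intro i hi
    rcases le_total i (d - i) with h | h
    · rw [min_eq_left h]
    · rw [min_eq_right h]; exact hsymm i hi
  have haux_lt : ∀ i j, i ≤ d → j ≤ d → min i (d - i) < min j (d - j) →
      f.coeff i < f.coeff j := by
    intro i j hi hj h
    rw [haux_eq i hi, haux_eq j hj]
    exact hmono _ (by omega) _ h
  have haux_le : ∀ i j, i ≤ d → j ≤ d → min i (d - i) ≤ min j (d - j) →
      f.coeff i ≤ f.coeff j := by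
    intro i j hi hj h
    rcases eq_or_lt_of_le h with h | h
    · rw [haux_eq i hi, haux_eq j hj, h]
    · exact (haux_lt i j hi hj h).le
  have hcoeff : ∀ i, ((1 - X ^ D) * f).coeff i
      = f.coeff i - if D ≤ i then f.coeff (i - D) else 0 := by
    intro i
    rw [sub_mul, one_mul, coeff_sub, mul_comm, coeff_mul_X_pow']
  set M := (d + D + 1) / 2 with hMdef
  have hMd : M ≤ d := by omega
  have hDM : D ≤ M := by omega
  have hposlt : ∀ i, i < M → 0 < ((1 - X ^ D) * f).coeff i := by
    intro i hi
    rw [hcoeff]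
    split_ifs with h
    · have : f.coeff (i - D) < f.coeff i :=
        haux_lt _ _ (by omega) (by omega) (by omega)
      linarith
    · simpa using hpos i (by omega)
  have hMle : ((1 - X ^ D) * f).coeff M ≤ 0 := by
    rw [hcoeff, if_pos hDM]
    have : f.coeff M ≤ f.coeff (M - D) := haux_le _ _ hMd (by omega) (by omega)
    linarith
  have hSinf : sInf {i : ℕ | ((1 - X ^ D) * f).coeff i ≤ 0} = M := by
    have hmem : M ∈ {i : ℕ | ((1 - X ^ D) * f).coeff i ≤ 0} := hMle
    refine le_antisymm (Nat.sInf_le hmem) ?_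
    by_contra hlt
    push_neg at hlt
    exact absurd (Nat.sInf_mem ⟨M, hmem⟩) (not_le.mpr (hposlt _ hlt))
  rw [hSinf, hcoeff M, if_pos hDM]
  constructor
  · intro h
    by_contra hpar
    simp only [Nat.even_iff] at hpar
    have h2M : 2 * M = d + D + 1 := by omega
    have : f.coeff M < f.coeff (M - D) :=
      haux_lt _ _ hMd (by omega) (by omega)
    linarith
  · intro h
    simp only [Nat.even_iff] at h
    have h2M : 2 * M = d + D := by omega
    rw [haux_eq M hMd, haux_eq (M - D) (by omega)]
    have hmin : min M (d - M) = min (M - D) (d - (M - D)) := by omega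
    rw [hmin, sub_self]
end

section
/- Let f = ∑_{i=0}^{d} a_i t^i be a symmetric, strictly unimodal polynomial of degree d with positive coefficients, and let D be an integer with 1 ≤ D < d. Then the product f·f_D is strictly unimodal (and symmetric). -/
open Polynomial

private lemma sum_coeff' (f : Polynomial ℝ) (D k : ℕ) :
    (f * fpoly D).coeff k
      = ∑ i ∈ Finset.range (D+1), if i ≤ k then f.coeff (k - i) else 0 := by
  rw [fpoly, Finset.mul_sum, Polynomial.finset_sum_coeff]
  exact Finset.sum_congr rfl fun i _ => Polynomial.coeff_mul_X_pow' f i k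

private lemma diff_coeff' (f : Polynomial ℝ) (D k : ℕ) :
    (f * fpoly D).coeff (k+1) =
      (f * fpoly D).coeff k + f.coeff (k+1) - (if D ≤ k then f.coeff (k - D) else 0) := by
  rw [sum_coeff', sum_coeff']
  conv_lhs => rw [Finset.sum_range_succ']
  conv_rhs => rw [Finset.sum_range_succ]
  have h1 : ∀ i, (if i + 1 ≤ k + 1 then f.coeff (k + 1 - (i + 1)) else 0)
      = (if i ≤ k then f.coeff (k - i) else 0) := by
    intro i
    have : k + 1 - (i + 1) = k - i := by omega
    rw [this]
    by_cases h : i ≤ k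
    · rw [if_pos h, if_pos (by omega)]
    · rw [if_neg h, if_neg (by omega)]
  rw [Finset.sum_congr rfl fun i _ => h1 i]
  have h2 : (if (0:ℕ) ≤ k + 1 then f.coeff (k + 1 - 0) else 0) = f.coeff (k+1) := by simp
  rw [h2]; ring

private lemma chain_lt' {d : ℕ} {a : ℕ → ℝ} (h : ∀ i, i < d/2 → a i < a (i+1)) :
    ∀ j' j, j < j' → j' ≤ d/2 → a j < a j' := by
  intro j'
  induction j' with
  | zero => intro j hj _; omega
  | succ n ih =>
    intro j hj hle
    rcases Nat.lt_succ_iff_lt_or_eq.mp hj with h1 | h1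
    · exact (ih j h1 (by omega)).trans (h n (by omega))
    · subst h1; exact h j (by omega)

private lemma lt_of_lt_of_sum_lt' {d : ℕ} {f : Polynomial ℝ}
    (hsymm : ∀ i ≤ d, f.coeff i = f.coeff (d - i))
    (h1 : ∀ i, i < d/2 → f.coeff i < f.coeff (i+1))
    {j j' : ℕ} (hjj : j < j') (hsum : j + j' < d) : f.coeff j < f.coeff j' := by
  by_cases hc : j' ≤ d / 2
  · exact chain_lt' h1 j' j hjj hc
  · rw [hsymm j' (by omega)]
    exact chain_lt' h1 (d - j') j (by omega) (by omega)

private lemma symm_coeff' (f : Polynomial ℝ) (d D : ℕ) (hdeg : f.natDegree = d)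
    (hsymm : ∀ i ≤ d, f.coeff i = f.coeff (d - i)) (i : ℕ) (hi : i ≤ d + D) :
    (f * fpoly D).coeff i = (f * fpoly D).coeff (d + D - i) := by
  rw [sum_coeff', sum_coeff']
  conv_rhs => rw [← Finset.sum_range_reflect]
  apply Finset.sum_congr rfl
  intro t ht
  rw [Finset.mem_range] at ht
  have ht' : t ≤ D := by omega
  have hre : D + 1 - 1 - t = D - t := by omega
  rw [hre]
  by_cases h1 : t ≤ i
  · by_cases h2 : i - t ≤ d
    · rw [if_pos h1, if_pos (by omega : D - t ≤ d + D - i), hsymm (i - t) h2]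
      congr 1
      omega
    · rw [if_pos h1, if_neg (by omega : ¬ D - t ≤ d + D - i),
        Polynomial.coeff_eq_zero_of_natDegree_lt (by rw [hdeg]; omega)]
  · rw [if_neg h1, if_pos (by omega : D - t ≤ d + D - i),
      (Polynomial.coeff_eq_zero_of_natDegree_lt (by rw [hdeg]; omega :
        f.natDegree < d + D - i - (D - t))).symm]

/-- If `f` is a symmetric, strictly unimodal polynomial of degree `d` with positive
coefficients and `1 ≤ D < d`, then `f·f_D` is strictly unimodal (and symmetric). -/
theorem mul_fpoly_strictlyUnimodal_of_strictlyUnimodal (d : ℕ) (f : Polynomial ℝ)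
    (hdeg : f.natDegree = d)
    (hpos : ∀ i ≤ d, 0 < f.coeff i)
    (hsymm : ∀ i ≤ d, f.coeff i = f.coeff (d - i))
    (huni : StrictlyUnimodalSeq d f.coeff)
    (D : ℕ) (hD1 : 1 ≤ D) (hDd : D < d) :
    StrictlyUnimodalSeq (d + D) ((f * fpoly D).coeff) ∧
      (∀ i ≤ d + D, (f * fpoly D).coeff i = (f * fpoly D).coeff (d + D - i)) := by
  have hsym2 : ∀ i ≤ d + D, (f * fpoly D).coeff i = (f * fpoly D).coeff (d + D - i) :=
    fun i hi => symm_coeff' f d D hdeg hsymm i hi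
  have hinc : ∀ k, k < (d + D) / 2 → (f * fpoly D).coeff k < (f * fpoly D).coeff (k+1) := by
    intro k hk
    rw [diff_coeff']
    have hk1 : k + 1 ≤ d := by omega
    by_cases hDk : D ≤ k
    · rw [if_pos hDk]
      have h := lt_of_lt_of_sum_lt' hsymm huni.1
        (show k - D < k + 1 by omega) (show (k - D) + (k + 1) < d by omega)
      linarith
    · rw [if_neg hDk]
      have := hpos (k+1) hk1
      linarith
  have hmid : Odd (d + D) →
      (f * fpoly D).coeff ((d+D)/2) = (f * fpoly D).coeff ((d+D)/2 + 1) := by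
    intro hodd
    obtain ⟨m, hm⟩ := hodd
    rw [diff_coeff']
    rw [if_pos (show D ≤ (d+D)/2 by omega)]
    have heq : f.coeff ((d+D)/2 - D) = f.coeff ((d+D)/2 + 1) := by
      rw [hsymm _ (show (d+D)/2 - D ≤ d by omega)]
      congr 1
      omega
    linarith
  refine ⟨⟨hinc, hmid, ?_⟩, hsym2⟩
  intro k hk1 hk2
  have h := hinc (d + D - 1 - k) (by omega)
  have e1 := hsym2 (d + D - 1 - k) (by omega)
  have e2 := hsym2 (d + D - 1 - k + 1) (by omega)
  have hA : d + D - (d + D - 1 - k) = k + 1 := by omega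
  have hB : d + D - (d + D - 1 - k + 1) = k := by omega
  rw [e1, e2, hA, hB] at h
  exact h
end

section
/- Let f = ∑_{i=0}^{d} a_i t^i be a symmetric polynomial of degree d with positive coefficients whose coefficients strictly increase for 0 ≤ i ≤ e, are constant for e ≤ i ≤ d − e, and strictly decrease for d − e ≤ i ≤ d, for some e with 2e < d. If D is an integer with d − 2e < D < d, then the product f·f_D is strictly unimodal. -/
open Polynomial

lemma fpoly_coeff' (D n : ℕ) :
    (fpoly D).coeff n = if n ≤ D then 1 else 0 := by
  rw [fpoly, finset_sum_coeff]
  simp only [coeff_X_pow]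
  rw [Finset.sum_ite_eq (Finset.range (D+1)) n (fun _ => (1:ℝ))]
  simp [Nat.lt_succ_iff]

lemma fpoly_natDegree_le' (D : ℕ) : (fpoly D).natDegree ≤ D := by
  apply Polynomial.natDegree_sum_le_of_forall_le
  intro i hi
  simpa using Nat.lt_succ_iff.mp (Finset.mem_range.mp hi)

lemma chain_lt (a : ℕ → ℝ) (e : ℕ) (h : ∀ i, i < e → a i < a (i+1)) :
    ∀ p q, p < q → q ≤ e → a p < a q := by
  intro p q hpq hq
  induction q with
  | zero => omega
  | succ n ih =>
    rcases Nat.lt_succ_iff_lt_or_eq.mp hpq with h' | h'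
    · exact (ih h' (by omega)).trans (h n (by omega))
    · subst h'; exact h p (by omega)

lemma chain_eq (a : ℕ → ℝ) (e P : ℕ) (h : ∀ i, e ≤ i → i < P → a i = a (i+1)) :
    ∀ p q, e ≤ p → p ≤ q → q ≤ P → a p = a q := by
  intro p q hep hpq hq
  induction q with
  | zero => obtain rfl : p = 0 := by omega
            rfl
  | succ n ih =>
    rcases Nat.lt_succ_iff_lt_or_eq.mp (Nat.lt_succ_of_le hpq) with h' | h'
    · exact (ih (by omega) (by omega)).trans (h n (by omega) (by omega))
    · subst h'; rfl

/-- If `f` is symmetric of degree `d` with positive coefficients, strictly increasing on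
`[0, e]`, constant on `[e, d-e]` and strictly decreasing on `[d-e, d]`, where `2e < d`,
and if `d - 2e < D < d`, then `f·f_D` is strictly unimodal. -/
theorem mul_fpoly_strictlyUnimodal_of_plateau (d e : ℕ) (he : 2 * e < d)
    (f : Polynomial ℝ) (hdeg : f.natDegree = d)
    (hpos : ∀ i ≤ d, 0 < f.coeff i)
    (hsymm : ∀ i ≤ d, f.coeff i = f.coeff (d - i))
    (hshape : IncConstDec f.coeff e (d - e) d)
    (D : ℕ) (hDl : d - 2 * e < D) (hDu : D < d) :
    StrictlyUnimodalSeq (d + D) ((f * fpoly D).coeff) := by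
  obtain ⟨hinc, hconst, _hdec⟩ := hshape
  set g := f * fpoly D with hg
  set N := d + D with hN
  -- symmetry of the product
  have hreff : reflect d f = f := by
    ext i
    rw [coeff_reflect]
    rcases le_or_gt i d with h | h
    · rw [revAt_le h, ← hsymm i h]
    · rw [revAt_eq_self_of_lt h]
  have hrefD : reflect D (fpoly D) = fpoly D := by
    ext i
    rw [coeff_reflect]
    rcases le_or_gt i D with h | h
    · rw [revAt_le h, fpoly_coeff', fpoly_coeff', if_pos h, if_pos (by omega)]
    · rw [revAt_eq_self_of_lt h]
  have hrefg : reflect N g = g := by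
    rw [hg, hN, reflect_mul f (fpoly D) (le_of_eq hdeg) (fpoly_natDegree_le' D),
      hreff, hrefD]
  have hcsymm : ∀ m ≤ N, g.coeff m = g.coeff (N - m) := by
    intro m hm
    conv_lhs => rw [← hrefg]
    rw [coeff_reflect, revAt_le hm]
  -- difference formula
  have hdiff : ∀ k : ℕ, g.coeff k - g.coeff (k + 1)
      = (if D + 1 ≤ k + 1 then f.coeff (k + 1 - (D + 1)) else 0) - f.coeff (k + 1) := by
    intro k
    have h : g * (X - 1) = f * X ^ (D + 1) - f := by
      rw [hg, fpoly, mul_assoc, geom_sum_mul]; ring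
    have h2 := congrArg (fun p => Polynomial.coeff p (k + 1)) h
    simp only [mul_sub, mul_one, coeff_sub, coeff_mul_X, coeff_mul_X_pow'] at h2
    linarith [h2]
  -- the increasing part
  have hup : ∀ i, i < N / 2 → g.coeff i < g.coeff (i + 1) := by
    intro i hi
    have hk2 : 2 * (i + 1) ≤ N := by omega
    have hkd : i + 1 ≤ d := by omega
    have key : (if D + 1 ≤ i + 1 then f.coeff (i + 1 - (D + 1)) else 0)
        < f.coeff (i + 1) := by
      split_ifs with hD
      · -- j := i - D, k := i + 1
        set j := i + 1 - (D + 1) with hj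
        set k := i + 1 with hk
        have hjk : j + k ≤ d - 1 := by omega
        have hje : j < e := by omega
        have hkd' : k ≤ d := hkd
        -- k' := min k (d - k)
        set k' := min k (d - k) with hk'
        have hak : f.coeff k = f.coeff k' := by
          rcases le_total k (d - k) with h | h
          · rw [hk', min_eq_left h]
          · rw [hk', min_eq_right h, hsymm k hkd']
        have hjk' : j < k' := by omega
        have hk'de : k' ≤ d - e := by omega
        rw [hak]
        rcases le_or_gt k' e with h | h
        · exact chain_lt f.coeff e hinc j k' hjk' h
        · have h1 : f.coeff j < f.coeff e := chain_lt f.coeff e hinc j e hje le_rfl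
          have h2 : f.coeff e = f.coeff k' :=
            chain_eq f.coeff e (d - e) hconst e k' le_rfl (le_of_lt h) hk'de
          linarith
      · exact hpos (i + 1) hkd
    have := hdiff i
    split_ifs at this key with hD
    · linarith
    · linarith
  refine ⟨hup, ?_, ?_⟩
  · -- middle equality
    intro hodd
    have hm : N / 2 + 1 ≤ N := by omega
    have := hcsymm (N / 2) (by omega)
    have hNe : N - N / 2 = N / 2 + 1 := by
      obtain ⟨m, hmm⟩ := hodd; omega
    rw [hNe] at this
    exact this
  · -- decreasing part by symmetry
    intro i hi hiN
    have h1 : g.coeff i = g.coeff (N - i) := hcsymm i (le_of_lt hiN)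
    have h2 : g.coeff (i + 1) = g.coeff (N - (i + 1)) := hcsymm (i + 1) hiN
    set i' := N - i - 1 with hi'
    have e1 : N - (i + 1) = i' := by omega
    have e2 : N - i = i' + 1 := by omega
    rw [h1, h2, e1, e2]
    exact hup i' (by omega)
end

section
/- Let f = ∑_{i=0}^{d} a_i t^i be a symmetric polynomial of degree d with positive coefficients which is either strictly unimodal or whose coefficients strictly increase up to some index e, are constant for e ≤ i ≤ d − e, and strictly decrease for d − e ≤ i ≤ d. If D ≥ d is an integer, then writing f·f_D = ∑_{i=0}^{d+D} b_i t^i, the coefficients b_i are strictly increasing for 0 ≤ i ≤ d, constant for d ≤ i ≤ D, and strictly decreasing for D ≤ i ≤ d + D. -/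
open Polynomial

/-- If `f` is symmetric of degree `d` with positive coefficients and is either strictly
unimodal, or strictly increasing up to some index `e`, constant on `[e, d-e]` and strictly
decreasing on `[d-e, d]`, and if `D ≥ d`, then the coefficients of `f·f_D` strictly
increase on `[0, d]`, are constant on `[d, D]`, and strictly decrease on `[D, d+D]`. -/
theorem mul_fpoly_incConstDec_of_large_D (d : ℕ) (f : Polynomial ℝ)
    (hdeg : f.natDegree = d)
    (hpos : ∀ i ≤ d, 0 < f.coeff i)
    (hsymm : ∀ i ≤ d, f.coeff i = f.coeff (d - i))
    (hshape : StrictlyUnimodalSeq d f.coeff ∨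
      ∃ e, 2 * e ≤ d ∧ IncConstDec f.coeff e (d - e) d)
    (D : ℕ) (hD : d ≤ D) :
    IncConstDec ((f * fpoly D).coeff) d D (d + D) := by
  have hcoeff : ∀ m, (f * fpoly D).coeff m = ∑ i ∈ Finset.range (D+1),
      if i ≤ m then f.coeff (m - i) else 0 := by
    intro m
    rw [fpoly, Finset.mul_sum, Polynomial.finset_sum_coeff]
    exact Finset.sum_congr rfl fun i _ => Polynomial.coeff_mul_X_pow' f i m
  have key : ∀ k, (f * fpoly D).coeff (k+1) =
      (f * fpoly D).coeff k + f.coeff (k+1) - (if D ≤ k then f.coeff (k - D) else 0) := by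
    intro k
    rw [hcoeff, hcoeff, Finset.sum_range_succ', Finset.sum_range_succ]
    have h1 : ∀ i, (if i + 1 ≤ k + 1 then f.coeff (k + 1 - (i+1)) else 0)
        = (if i ≤ k then f.coeff (k - i) else 0) := by
      intro i
      by_cases h : i ≤ k <;> simp [h, Nat.succ_sub_succ]
    simp only [h1, Nat.zero_le, if_true, Nat.sub_zero]
    ring
  refine ⟨?_, ?_, ?_⟩
  · intro i hi
    rw [key]
    have hni : ¬ D ≤ i := by omega
    have := hpos (i+1) (by omega)
    simp only [hni, if_false]
    linarith
  · intro i hi1 hi2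
    rw [key]
    have hz : f.coeff (i+1) = 0 :=
      Polynomial.coeff_eq_zero_of_natDegree_lt (by omega)
    have hni : ¬ D ≤ i := by omega
    simp [hz, hni]
  · intro i hi1 hi2
    rw [key]
    have hz : f.coeff (i+1) = 0 :=
      Polynomial.coeff_eq_zero_of_natDegree_lt (by omega)
    have hyi : D ≤ i := hi1
    have := hpos (i - D) (by omega)
    simp only [hz, hyi, if_true]
    linarith
end
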